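/- Let 𝔨 be a finite-dimensional real Lie algebra and let 𝔞 be a smooth solution of the Yang–Mills–Poisson equation. Then the 𝔨-valued function φ(x,s) = ∑_j ( ∂_j(∂_s 𝔞_j) + [𝔞_j, ∂_s 𝔞_j] ) satisfies ∂_s φ = 0 identically. In particular, if ∑_j ∂_j^𝔞 (∂_s 𝔞_j) vanishes at s = 0 (i.e. ∂_s 𝔞(·,0) is horizontal at 𝔞(·,0)), then ∑_j ∂_j^𝔞 (∂_s 𝔞_j) = 0 for all s ≥ 0. -/

import Mathlib

/-!
Differentiating `φ = ∑ⱼ ∇ⱼ(∂ₛ𝔞ⱼ)` in `s` gives `∑ⱼ ∇ⱼ(∂ₛ²𝔞ⱼ)`, since the extra term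
`[∂ₛ𝔞ⱼ, ∂ₛ𝔞ⱼ]` vanishes. By the Yang–Mills–Poisson equation this is `-∑ⱼ ∑ₖ ∇ⱼ∇ₖ 𝔟ₖⱼ`, and the
antisymmetry of `𝔟` turns that double sum into half of `∑ⱼ ∑ₖ [∇ⱼ, ∇ₖ] 𝔟ₖⱼ = ∑ⱼ ∑ₖ [𝔟ⱼₖ, 𝔟ₖⱼ]`,
which is zero. So `φ` is constant in `s`.
-/

/-- Partial derivative `∂_j f` of a function on `ℝ³` with values in a normed
real vector space. -/
noncomputable def pd3 {𝕜 : Type*} [NormedAddCommGroup 𝕜] [NormedSpace ℝ 𝕜]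
    (j : Fin 3) (f : (Fin 3 → ℝ) → 𝕜) (x : Fin 3 → ℝ) : 𝕜 :=
  fderiv ℝ f x (Pi.single j 1)

/-- Spatial curvature `𝔟_{jk}(x,s) = ∂_j 𝔞_k − ∂_k 𝔞_j + [𝔞_j, 𝔞_k]` of a
time-dependent `𝔨`-valued gauge potential, with bracket `β`. -/
noncomputable def curvK {𝔨 : Type*} [NormedAddCommGroup 𝔨] [NormedSpace ℝ 𝔨]
    (β : 𝔨 →ₗ[ℝ] 𝔨 →ₗ[ℝ] 𝔨) (𝔞 : Fin 3 → (Fin 3 → ℝ) → ℝ → 𝔨) (j k : Fin 3)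
    (x : Fin 3 → ℝ) (s : ℝ) : 𝔨 :=
  pd3 j (fun y => 𝔞 k y s) x - pd3 k (fun y => 𝔞 j y s) x
    + β (𝔞 j x s) (𝔞 k x s)

/-- The Yang–Mills–Poisson equation in temporal gauge:
`∂_s² 𝔞_j = −∑_k ∂_k^𝔞 𝔟_{kj}` where `∂_k^𝔞 ξ = ∂_k ξ + [𝔞_k, ξ]`. -/
def YangMillsPoissonK {𝔨 : Type*} [NormedAddCommGroup 𝔨] [NormedSpace ℝ 𝔨]
    (β : 𝔨 →ₗ[ℝ] 𝔨 →ₗ[ℝ] 𝔨) (𝔞 : Fin 3 → (Fin 3 → ℝ) → ℝ → 𝔨) : Prop :=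
  ∀ j x (s : ℝ), 0 ≤ s →
    deriv (fun τ => deriv (fun σ => 𝔞 j x σ) τ) s =
      -∑ k, (pd3 k (fun y => curvK β 𝔞 k j y s) x
        + β (𝔞 k x s) (curvK β 𝔞 k j x s))


open scoped ContDiff

section DirectionalDerivative

variable {E F G H : Type*} [NormedAddCommGroup E] [NormedSpace ℝ E]
  [NormedAddCommGroup F] [NormedSpace ℝ F] [NormedAddCommGroup G] [NormedSpace ℝ G]
  [NormedAddCommGroup H] [NormedSpace ℝ H]

noncomputable def dirDeriv (v : E) (f : E → F) : E → F := fun p => fderiv ℝ f p v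

theorem contDiff_dirDeriv {f : E → F} (hf : ContDiff ℝ ∞ f) (v : E) :
    ContDiff ℝ ∞ (dirDeriv v f) :=
  (hf.fderiv_right (by simp)).clm_apply contDiff_const

theorem differentiableAt_dirDeriv {f : E → F} {p : E} (hf : ContDiffAt ℝ 2 f p) (v : E) :
    DifferentiableAt ℝ (dirDeriv v f) p :=
  ((hf.fderiv_right (m := 1) le_rfl).differentiableAt one_ne_zero).clm_apply
    (differentiableAt_const v)

theorem dirDeriv_neg (v : E) (f : E → F) (p : E) :
    dirDeriv v (fun q => -f q) p = -dirDeriv v f p := by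
  simp [dirDeriv]

theorem dirDeriv_add {f g : E → F} {p : E} (hf : DifferentiableAt ℝ f p)
    (hg : DifferentiableAt ℝ g p) (v : E) :
    dirDeriv v (fun q => f q + g q) p = dirDeriv v f p + dirDeriv v g p := by
  simp [dirDeriv, fderiv_fun_add hf hg]

theorem dirDeriv_sum {ι : Type*} (s : Finset ι) {f : ι → E → F} {p : E}
    (hf : ∀ i ∈ s, DifferentiableAt ℝ (f i) p) (v : E) :
    dirDeriv v (fun q => ∑ i ∈ s, f i q) p = ∑ i ∈ s, dirDeriv v (f i) p := by
  simp [dirDeriv, fderiv_fun_sum hf]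

theorem dirDeriv_bilinear (B : F →L[ℝ] G →L[ℝ] H) {f : E → F} {g : E → G} {p : E}
    (hf : DifferentiableAt ℝ f p) (hg : DifferentiableAt ℝ g p) (v : E) :
    dirDeriv v (fun q => B (f q) (g q)) p =
      B (dirDeriv v f p) (g p) + B (f p) (dirDeriv v g p) := by
  simp [dirDeriv, B.fderiv_of_bilinear hf hg, add_comm]

theorem dirDeriv_comm {f : E → F} {p : E} (hf : ContDiffAt ℝ 2 f p) (v w : E) :
    dirDeriv v (dirDeriv w f) p = dirDeriv w (dirDeriv v f) p := by
  have hf' : DifferentiableAt ℝ (fderiv ℝ f) p :=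
    (hf.fderiv_right (m := 1) le_rfl).differentiableAt one_ne_zero
  have hsecond : ∀ u u', dirDeriv u (dirDeriv u' f) p = fderiv ℝ (fderiv ℝ f) p u u' := by
    intro u u'
    change fderiv ℝ (fun q => fderiv ℝ f q u') p u = _
    simp [fderiv_clm_apply hf' (differentiableAt_const u')]
  rw [hsecond, hsecond, (hf.isSymmSndFDerivAt (by simp)).eq]

theorem dirDeriv_congr_of_eqOn_line {f g : E → F} {p v : E} (hf : DifferentiableAt ℝ f p)
    (hg : DifferentiableAt ℝ g p) (hfg : ∀ t : ℝ, f (p + t • v) = g (p + t • v)) :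
    dirDeriv v f p = dirDeriv v g p := by
  simp only [dirDeriv, ← hf.lineDeriv_eq_fderiv, ← hg.lineDeriv_eq_fderiv, lineDeriv, hfg]

end DirectionalDerivative

section Bracket

variable {𝔨 : Type*} [NormedAddCommGroup 𝔨] [NormedSpace ℝ 𝔨] {B : 𝔨 →L[ℝ] 𝔨 →L[ℝ] 𝔨}

theorem bracket_swap (halt : ∀ x, B x x = 0) (x y : 𝔨) : B x y = -B y x := by
  have h := halt (x + y)
  simp only [map_add, add_apply, halt, zero_add, add_zero] at h
  exact eq_neg_of_add_eq_zero_right h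

theorem bracket_bracket_sub (halt : ∀ x, B x x = 0)
    (hjac : ∀ x y z, B x (B y z) + B y (B z x) + B z (B x y) = 0) (x y z : 𝔨) :
    B x (B y z) - B y (B x z) = B (B x y) z := by
  have h := hjac x y z
  rw [bracket_swap halt z x, map_neg, bracket_swap halt z] at h
  linear_combination (norm := abel) h

end Bracket

section CovariantDerivative

variable {E 𝔨 ι : Type*} [NormedAddCommGroup E] [NormedSpace ℝ E]
  [NormedAddCommGroup 𝔨] [NormedSpace ℝ 𝔨]
  (B : 𝔨 →L[ℝ] 𝔨 →L[ℝ] 𝔨) (A : ι → E → 𝔨) (e : ι → E)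

-- `A j` is the component of the connection along the direction `e j`; `covDeriv B A e j` is
-- `∂ⱼ^A`, and `covDiv` is the covariant coderivative `-d_A^*` of a `1`-form given by components.
noncomputable def covDeriv (j : ι) (ξ : E → 𝔨) : E → 𝔨 :=
  fun p => dirDeriv (e j) ξ p + B (A j p) (ξ p)

noncomputable def curvature (j k : ι) : E → 𝔨 :=
  fun p => dirDeriv (e j) (A k) p - dirDeriv (e k) (A j) p + B (A j p) (A k p)

noncomputable def covDiv [Fintype ι] (θ : ι → E → 𝔨) : E → 𝔨 :=
  fun p => ∑ j, covDeriv B A e j (θ j) p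

variable {B A e}

theorem contDiff_covDeriv {j : ι} {ξ : E → 𝔨} (hA : ContDiff ℝ ∞ (A j)) (hξ : ContDiff ℝ ∞ ξ) :
    ContDiff ℝ ∞ (covDeriv B A e j ξ) :=
  (contDiff_dirDeriv hξ (e j)).add ((B.contDiff.comp hA).clm_apply hξ)

theorem contDiff_curvature (hA : ∀ j, ContDiff ℝ ∞ (A j)) (j k : ι) :
    ContDiff ℝ ∞ (curvature B A e j k) :=
  ((contDiff_dirDeriv (hA k) (e j)).sub (contDiff_dirDeriv (hA j) (e k))).add
    ((B.contDiff.comp (hA j)).clm_apply (hA k))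

theorem contDiff_covDiv [Fintype ι] {θ : ι → E → 𝔨} (hA : ∀ j, ContDiff ℝ ∞ (A j))
    (hθ : ∀ j, ContDiff ℝ ∞ (θ j)) : ContDiff ℝ ∞ (covDiv B A e θ) :=
  ContDiff.sum fun j _ => contDiff_covDeriv (hA j) (hθ j)

theorem curvature_swap (halt : ∀ x, B x x = 0) (j k : ι) :
    curvature B A e j k = fun p => -curvature B A e k j p := by
  funext p
  simp only [curvature, bracket_swap halt (A j p)]
  abel

theorem covDeriv_neg (j : ι) (ξ : E → 𝔨) :
    covDeriv B A e j (fun q => -ξ q) = fun p => -covDeriv B A e j ξ p := by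
  funext p
  simp only [covDeriv, dirDeriv_neg, map_neg, neg_add]

theorem covDeriv_sum {κ : Type*} (s : Finset κ) (j : ι) {ξ : κ → E → 𝔨} {p : E}
    (hξ : ∀ i ∈ s, DifferentiableAt ℝ (ξ i) p) :
    covDeriv B A e j (fun q => ∑ i ∈ s, ξ i q) p = ∑ i ∈ s, covDeriv B A e j (ξ i) p := by
  simp only [covDeriv, dirDeriv_sum s hξ, map_sum, Finset.sum_add_distrib]

theorem covDeriv_congr_of_eqOn_line {j : ι} {ξ η : E → 𝔨} {p : E} (hξ : DifferentiableAt ℝ ξ p)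
    (hη : DifferentiableAt ℝ η p) (hξη : ∀ t : ℝ, ξ (p + t • e j) = η (p + t • e j)) :
    covDeriv B A e j ξ p = covDeriv B A e j η p := by
  have hp : ξ p = η p := by simpa using hξη 0
  simp only [covDeriv, dirDeriv_congr_of_eqOn_line hξ hη hξη, hp]

theorem dirDeriv_covDeriv {j : ι} {ξ : E → 𝔨} {p : E} (hA : DifferentiableAt ℝ (A j) p)
    (hξ : ContDiffAt ℝ 2 ξ p) (v : E) :
    dirDeriv v (covDeriv B A e j ξ) p =
      dirDeriv (e j) (dirDeriv v ξ) p + B (dirDeriv v (A j) p) (ξ p)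
        + B (A j p) (dirDeriv v ξ p) := by
  have hξ' : DifferentiableAt ℝ ξ p := hξ.differentiableAt two_ne_zero
  have hAξ : DifferentiableAt ℝ (fun q => B (A j q) (ξ q)) p := by fun_prop
  unfold covDeriv
  rw [dirDeriv_add (differentiableAt_dirDeriv hξ _) hAξ, dirDeriv_bilinear B hA hξ',
    dirDeriv_comm hξ, add_assoc]

theorem covDeriv_covDeriv {j k : ι} {ξ : E → 𝔨} {p : E} (hA : DifferentiableAt ℝ (A k) p)
    (hξ : ContDiffAt ℝ 2 ξ p) :
    covDeriv B A e j (covDeriv B A e k ξ) p =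
      dirDeriv (e j) (dirDeriv (e k) ξ) p + B (dirDeriv (e j) (A k) p) (ξ p)
        + B (A k p) (dirDeriv (e j) ξ p) + B (A j p) (dirDeriv (e k) ξ p)
        + B (A j p) (B (A k p) (ξ p)) := by
  rw [covDeriv, dirDeriv_covDeriv hA hξ, dirDeriv_comm hξ]
  simp only [covDeriv, map_add]
  abel

theorem covDeriv_covDeriv_sub (halt : ∀ x, B x x = 0)
    (hjac : ∀ x y z, B x (B y z) + B y (B z x) + B z (B x y) = 0) {j k : ι} {ξ : E → 𝔨} {p : E}
    (hAj : DifferentiableAt ℝ (A j) p) (hAk : DifferentiableAt ℝ (A k) p)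
    (hξ : ContDiffAt ℝ 2 ξ p) :
    covDeriv B A e j (covDeriv B A e k ξ) p - covDeriv B A e k (covDeriv B A e j ξ) p =
      B (curvature B A e j k p) (ξ p) := by
  rw [covDeriv_covDeriv hAk hξ, covDeriv_covDeriv hAj hξ, dirDeriv_comm hξ (e j), curvature,
    map_add, map_sub, add_apply, sub_apply, ← bracket_bracket_sub halt hjac]
  abel

theorem covDiv_covDiv_curvature_eq_zero [Fintype ι] (halt : ∀ x, B x x = 0)
    (hjac : ∀ x y z, B x (B y z) + B y (B z x) + B z (B x y) = 0)
    (hA : ∀ j, ContDiff ℝ ∞ (A j)) (p : E) :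
    covDiv B A e (fun j => covDiv B A e fun k => curvature B A e k j) p = 0 := by
  have hF := contDiff_curvature (B := B) (e := e) hA
  have hA1 : ∀ j, DifferentiableAt ℝ (A j) p := fun j => (hA j).differentiable (by simp) p
  set S := ∑ j, ∑ k, covDeriv B A e j (covDeriv B A e k (curvature B A e k j)) p
  set T := ∑ j, ∑ k, covDeriv B A e k (covDeriv B A e j (curvature B A e k j)) p
  have hS : covDiv B A e (fun j => covDiv B A e fun k => curvature B A e k j) p = S :=
    Finset.sum_congr rfl fun j _ => covDeriv_sum _ _ fun k _ =>
      (contDiff_covDeriv (hA k) (hF k j)).differentiable (by simp) p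
  have hST : S = -T := by
    simp only [S, T]
    rw [Finset.sum_comm, ← Finset.sum_neg_distrib]
    refine Finset.sum_congr rfl fun a _ => ?_
    rw [← Finset.sum_neg_distrib]
    refine Finset.sum_congr rfl fun b _ => ?_
    rw [curvature_swap halt a b, covDeriv_neg, covDeriv_neg]
  have hcomm : S - T = 0 := by
    simp only [S, T, ← Finset.sum_sub_distrib]
    refine Finset.sum_eq_zero fun j _ => Finset.sum_eq_zero fun k _ => ?_
    rw [covDeriv_covDeriv_sub halt hjac (hA1 j) (hA1 k)
      ((hF k j).contDiffAt.of_le ENat.LEInfty.out), curvature_swap halt k j, map_neg, halt,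
      neg_zero]
  have hSS : S + S = 0 := by rw [← hcomm, sub_eq_add_neg, ← hST]
  rw [← two_smul ℝ] at hSS
  rw [hS, (smul_eq_zero.mp hSS).resolve_left two_ne_zero]

theorem dirDeriv_covDiv_dirDeriv_eq_zero [Fintype ι] (halt : ∀ x, B x x = 0)
    (hjac : ∀ x y z, B x (B y z) + B y (B z x) + B z (B x y) = 0)
    (hA : ∀ j, ContDiff ℝ ∞ (A j)) (τ : E) {p : E}
    (hYM : ∀ j (t : ℝ), dirDeriv τ (dirDeriv τ (A j)) (p + t • e j) =
      -covDiv B A e (fun k => curvature B A e k j) (p + t • e j)) :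
    dirDeriv τ (covDiv B A e fun j => dirDeriv τ (A j)) p = 0 := by
  have hτA : ∀ j, ContDiff ℝ ∞ (dirDeriv τ (A j)) := fun j => contDiff_dirDeriv (hA j) τ
  have hYM_smooth : ∀ j, ContDiff ℝ ∞ (fun q => -covDiv B A e (fun k => curvature B A e k j) q) :=
    fun j => (contDiff_covDiv hA fun k => contDiff_curvature hA k j).neg
  calc dirDeriv τ (covDiv B A e fun j => dirDeriv τ (A j)) p
      = ∑ j, covDeriv B A e j (dirDeriv τ (dirDeriv τ (A j))) p := by
        unfold covDiv
        rw [dirDeriv_sum _ fun j _ =>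
          (contDiff_covDeriv (hA j) (hτA j)).differentiable (by simp) p]
        refine Finset.sum_congr rfl fun j _ => ?_
        rw [dirDeriv_covDeriv ((hA j).differentiable (by simp) p)
          ((hτA j).contDiffAt.of_le ENat.LEInfty.out), halt, add_zero]
        rfl
    _ = ∑ j, covDeriv B A e j (fun q => -covDiv B A e (fun k => curvature B A e k j) q) p :=
        Finset.sum_congr rfl fun j _ => covDeriv_congr_of_eqOn_line
          ((contDiff_dirDeriv (hτA j) τ).differentiable (by simp) p)
          ((hYM_smooth j).differentiable (by simp) p) (hYM j)
    _ = -covDiv B A e (fun j => covDiv B A e fun k => curvature B A e k j) p := by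
        simp only [covDeriv_neg, Finset.sum_neg_distrib]
        rfl
    _ = 0 := by rw [covDiv_covDiv_curvature_eq_zero halt hjac hA, neg_zero]

end CovariantDerivative

section GaugePotential

open Function

variable {F 𝔨 : Type*} [NormedAddCommGroup F] [NormedSpace ℝ F]
  [NormedAddCommGroup 𝔨] [NormedSpace ℝ 𝔨]

def spaceDir (j : Fin 3) : (Fin 3 → ℝ) × ℝ := (Pi.single j 1, 0)

theorem pd3_eq_dirDeriv {f : (Fin 3 → ℝ) × ℝ → F} {x : Fin 3 → ℝ} {s : ℝ}
    (hf : DifferentiableAt ℝ f (x, s)) (j : Fin 3) :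
    pd3 j (fun y => f (y, s)) x = dirDeriv (spaceDir j) f (x, s) := by
  have h := (hf.hasFDerivAt.comp x (hasFDerivAt_prodMk_left (𝕜 := ℝ) x s)).fderiv
  simp only [pd3, comp_def] at h ⊢
  simp [h, dirDeriv, spaceDir]

theorem deriv_eq_dirDeriv {f : (Fin 3 → ℝ) × ℝ → F} {x : Fin 3 → ℝ} {s : ℝ}
    (hf : DifferentiableAt ℝ f (x, s)) :
    deriv (fun σ => f (x, σ)) s = dirDeriv (0, 1) f (x, s) :=
  (hf.hasFDerivAt.comp_hasDerivAt s ((hasDerivAt_const s x).prodMk (hasDerivAt_id s))).deriv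

theorem pd3_eq_dirDeriv_uncurry {g : (Fin 3 → ℝ) → ℝ → F} {x : Fin 3 → ℝ} {s : ℝ}
    (hg : DifferentiableAt ℝ (uncurry g) (x, s)) (j : Fin 3) :
    pd3 j (fun y => g y s) x = dirDeriv (spaceDir j) (uncurry g) (x, s) :=
  pd3_eq_dirDeriv hg j

theorem deriv_eq_dirDeriv_uncurry {g : (Fin 3 → ℝ) → ℝ → F} {x : Fin 3 → ℝ} {s : ℝ}
    (hg : DifferentiableAt ℝ (uncurry g) (x, s)) :
    deriv (fun σ => g x σ) s = dirDeriv (0, 1) (uncurry g) (x, s) :=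
  deriv_eq_dirDeriv hg

variable [FiniteDimensional ℝ 𝔨] {β : 𝔨 →ₗ[ℝ] 𝔨 →ₗ[ℝ] 𝔨} {a : Fin 3 → (Fin 3 → ℝ) → ℝ → 𝔨}

theorem curvK_eq_curvature (ha : ∀ j, Differentiable ℝ (uncurry (a j))) (j k : Fin 3)
    (y : Fin 3 → ℝ) (s : ℝ) :
    curvK β a j k y s =
      curvature β.toContinuousBilinearMap (fun i => uncurry (a i)) spaceDir j k (y, s) := by
  rw [curvK, pd3_eq_dirDeriv_uncurry (ha k _), pd3_eq_dirDeriv_uncurry (ha j _)]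
  rfl

theorem YangMillsPoissonK.dirDeriv_dirDeriv (hYMP : YangMillsPoissonK β a)
    (ha : ∀ j, ContDiff ℝ ∞ (uncurry (a j))) (j : Fin 3) (y : Fin 3 → ℝ) {s : ℝ} (hs : 0 ≤ s) :
    dirDeriv (0, 1) (dirDeriv (0, 1) (uncurry (a j))) (y, s) =
      -covDiv β.toContinuousBilinearMap (fun i => uncurry (a i)) spaceDir
        (fun k => curvature β.toContinuousBilinearMap (fun i => uncurry (a i)) spaceDir k j)
        (y, s) := by
  have ha1 : ∀ j, Differentiable ℝ (uncurry (a j)) := fun j => (ha j).differentiable (by simp)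
  have h := hYMP j y s hs
  have hinner : (fun τ => deriv (fun σ => a j y σ) τ) =
      fun τ => dirDeriv (0, 1) (uncurry (a j)) (y, τ) :=
    funext fun τ => deriv_eq_dirDeriv_uncurry (ha1 j _)
  simp only [curvK_eq_curvature ha1] at h
  rw [hinner, deriv_eq_dirDeriv ((contDiff_dirDeriv (ha j) _).differentiable (by simp) _)] at h
  rw [h]
  congr 1
  refine Finset.sum_congr rfl fun k _ => ?_
  rw [pd3_eq_dirDeriv ((contDiff_curvature ha k j).differentiable (by simp) _)]
  rfl

theorem sum_pd3_deriv_eq_covDiv (ha : ∀ j, ContDiff ℝ ∞ (uncurry (a j)))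
    (x : Fin 3 → ℝ) (s : ℝ) :
    ∑ j, (pd3 j (fun y => deriv (fun σ => a j y σ) s) x + β (a j x s) (deriv (fun σ => a j x σ) s))
      = covDiv β.toContinuousBilinearMap (fun i => uncurry (a i)) spaceDir
        (fun j => dirDeriv (0, 1) (uncurry (a j))) (x, s) := by
  have ha1 : ∀ j, Differentiable ℝ (uncurry (a j)) := fun j => (ha j).differentiable (by simp)
  simp only [deriv_eq_dirDeriv_uncurry (ha1 _ _)]
  refine Finset.sum_congr rfl fun j _ => ?_
  rw [pd3_eq_dirDeriv ((contDiff_dirDeriv (ha j) _).differentiable (by simp) _)]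
  rfl

end GaugePotential

theorem eq_apply_zero_of_deriv_eq_zero_of_nonneg {F : Type*} [NormedAddCommGroup F]
    [NormedSpace ℝ F] {f : ℝ → F} (hf : Differentiable ℝ f) (hf' : ∀ s, 0 ≤ s → deriv f s = 0)
    {s : ℝ} (hs : 0 ≤ s) : f s = f 0 :=
  constant_of_has_deriv_right_zero hf.continuous.continuousOn
    (fun σ hσ => hf' σ hσ.1 ▸ (hf σ).hasDerivAt.hasDerivWithinAt) s ⟨hs, le_rfl⟩

/-- For a smooth solution `𝔞` of the Yang–Mills–Poisson equation
(`𝔨` a finite-dimensional real Lie algebra), the function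
`φ(x,s) = ∑_j (∂_j(∂_s 𝔞_j) + [𝔞_j, ∂_s 𝔞_j]) = ∑_j ∂_j^𝔞(∂_s 𝔞_j)` satisfies
`∂_s φ = 0` identically; in particular if `φ(·,0) = 0` (`∂_s 𝔞(·,0)` is
horizontal at `𝔞(·,0)`) then `φ(·,s) = 0` for all `s ≥ 0`. -/
theorem horizontality_is_preserved
    (𝔨 : Type*) [NormedAddCommGroup 𝔨] [NormedSpace ℝ 𝔨] [FiniteDimensional ℝ 𝔨]
    (β : 𝔨 →ₗ[ℝ] 𝔨 →ₗ[ℝ] 𝔨)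
    (halt : ∀ x : 𝔨, β x x = 0)
    (hjac : ∀ x y z : 𝔨, β x (β y z) + β y (β z x) + β z (β x y) = 0)
    (𝔞 : Fin 3 → (Fin 3 → ℝ) → ℝ → 𝔨)
    (h𝔞 : ∀ j, ContDiff ℝ (⊤ : ℕ∞) fun p : (Fin 3 → ℝ) × ℝ => 𝔞 j p.1 p.2)
    (hYMP : YangMillsPoissonK β 𝔞)
    (φ : (Fin 3 → ℝ) → ℝ → 𝔨)
    (hφ : ∀ x s, φ x s =
      ∑ j, (pd3 j (fun y => deriv (fun σ => 𝔞 j y σ) s) x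
        + β (𝔞 j x s) (deriv (fun σ => 𝔞 j x σ) s))) :
    (∀ x (s : ℝ), 0 ≤ s → deriv (fun σ => φ x σ) s = 0) ∧
    ((∀ x, φ x 0 = 0) → ∀ x (s : ℝ), 0 ≤ s → φ x s = 0) := by
  set B := β.toContinuousBilinearMap
  set A : Fin 3 → (Fin 3 → ℝ) × ℝ → 𝔨 := fun j => Function.uncurry (𝔞 j)
  have hA : ∀ j, ContDiff ℝ ∞ (A j) := h𝔞
  set Φ := covDiv B A spaceDir fun j => dirDeriv (0, 1) (A j)
  have hΦ : Differentiable ℝ Φ :=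
    (contDiff_covDiv hA fun j => contDiff_dirDeriv (hA j) _).differentiable (by simp)
  have hφΦ : ∀ x, (fun σ => φ x σ) = fun σ => Φ (x, σ) := fun x =>
    funext fun σ => (hφ x σ).trans (sum_pd3_deriv_eq_covDiv hA x σ)
  have hφ' : ∀ x (s : ℝ), 0 ≤ s → deriv (fun σ => φ x σ) s = 0 := by
    intro x s hs
    rw [hφΦ, deriv_eq_dirDeriv (hΦ _)]
    refine dirDeriv_covDiv_dirDeriv_eq_zero halt hjac hA _ fun j t => ?_
    have hline : (x, s) + t • spaceDir j = (x + t • Pi.single j 1, s) := by simp [spaceDir]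
    rw [hline]
    exact hYMP.dirDeriv_dirDeriv hA j _ hs
  refine ⟨hφ', fun h0 x s hs => ?_⟩
  have hdiff : Differentiable ℝ (fun σ => φ x σ) := by
    rw [hφΦ]
    fun_prop
  rw [eq_apply_zero_of_deriv_eq_zero_of_nonneg hdiff (hφ' x) hs, h0 x]
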